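/- arXiv:2201.08681 — 3 statements merged into one kernel-verified Lean document; each statement's English description precedes it below -/
import Mathlib

section
/- Let κ be an infinite cardinal and assume 2^κ = κ⁺ (an instance of GCH). Then Breaker has a winning strategy in the Maker-Breaker game MB(K_{κ,κ⁺}, K_{κ,κ⁺}). -/
open Cardinal

universe u v

/-- A strategy in a transfinite positional game with moves of type `α`:
given the current turn (an ordinal) and the history of all moves made at
earlier turns, it produces a move. -/
def MBStrategy (α : Type u) : Type (u + 1) :=
  ∀ γ : Ordinal.{u}, (∀ β : Ordinal.{u}, β < γ → α) → α

/-- A completed play of a transfinite positional game on the board `board`: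
an ordinal-indexed sequence of moves, each an element of the board that was not
claimed at any earlier turn, which goes on until every element of the board has
been claimed. -/
structure MBPlay {α : Type u} (board : Set α) : Type (u + 1) where
  len : Ordinal.{u}
  move : ∀ γ : Ordinal.{u}, γ < len → α
  move_mem : ∀ γ h, move γ h ∈ board
  move_inj : ∀ γ₁ h₁ γ₂ h₂, move γ₁ h₁ = move γ₂ h₂ → γ₁ = γ₂
  complete : ∀ e ∈ board, ∃ γ h, move γ h = e

namespace MBPlay

variable {α : Type u} {board : Set α}

/-- The set of board elements claimed at the turns satisfying `turns`. -/
def claimed (p : MBPlay board) (turns : Ordinal.{u} → Prop) : Set α :=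
  {e | ∃ γ h, turns γ ∧ p.move γ h = e}

/-- The play is consistent with the player moving at the turns satisfying
`turns` using the strategy `σ`. -/
def Follows (p : MBPlay board) (turns : Ordinal.{u} → Prop) (σ : MBStrategy α) : Prop :=
  ∀ γ h, turns γ → p.move γ h = σ γ (fun β hβ => p.move β (hβ.trans h))

end MBPlay

/-- In the Maker–Breaker game the moves alternate with Maker moving first: the
turn `γ` belongs to Maker iff `γ % 2 = 0`.  In particular turn `0` and all
limit turns belong to Maker, and Breaker answers Maker's preceding move. -/
def makerTurn (γ : Ordinal.{u}) : Prop := γ % 2 = 0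

/-- The turns on which Breaker moves in the Maker–Breaker game. -/
def breakerTurn (γ : Ordinal.{u}) : Prop := γ % 2 = 1

/-- A strategy is legal for the player moving at the turns satisfying `turns`
if at every position (arising at such a turn) in which some element of the
board is still unclaimed, it produces an unclaimed element of the board. -/
def MBStrategy.IsLegal {α : Type u} (σ : MBStrategy α) (board : Set α)
    (turns : Ordinal.{u} → Prop) : Prop :=
  ∀ (γ : Ordinal.{u}) (hist : ∀ β : Ordinal.{u}, β < γ → α), turns γ →
    (∀ β h, hist β h ∈ board) →
    (∀ β₁ h₁ β₂ h₂, hist β₁ h₁ = hist β₂ h₂ → β₁ = β₂) →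
    (∃ e ∈ board, ∀ β h, hist β h ≠ e) →
    σ γ hist ∈ board ∧ ∀ β h, hist β h ≠ σ γ hist

/-- `G` contains a copy of `H`, i.e. a subgraph isomorphic to `H`; equivalently
there is an injective graph homomorphism from `H` into `G`. -/
def ContainsCopy {V : Type u} {W : Type v} (G : SimpleGraph V) (H : SimpleGraph W) : Prop :=
  ∃ f : H →g G, Function.Injective f

/-- Maker has a winning strategy in the Maker–Breaker game `MB(G, H)`:
playing at the even turns (including turn `0` and all limit turns) of a
transfinite play on the edge set of `G`, she can ensure that whatever Breaker
does at the odd turns, at the end of the play the graph formed by her claimed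
edges contains a copy of `H`. -/
def MakerWins {V : Type u} {W : Type v} (G : SimpleGraph V) (H : SimpleGraph W) : Prop :=
  ∃ σ : MBStrategy (Sym2 V), σ.IsLegal G.edgeSet makerTurn ∧
    ∀ p : MBPlay G.edgeSet, p.Follows makerTurn σ →
      ContainsCopy (SimpleGraph.fromEdgeSet (p.claimed makerTurn)) H

/-- Breaker has a winning strategy in the Maker–Breaker game `MB(G, H)`:
playing at the odd turns of a transfinite play on the edge set of `G`, he can
ensure that at the end of the play the graph formed by Maker's claimed edges
does not contain a copy of `H`. -/
def BreakerWins {V : Type u} {W : Type v} (G : SimpleGraph V) (H : SimpleGraph W) : Prop :=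
  ∃ σ : MBStrategy (Sym2 V), σ.IsLegal G.edgeSet breakerTurn ∧
    ∀ p : MBPlay G.edgeSet, p.Follows breakerTurn σ →
      ¬ ContainsCopy (SimpleGraph.fromEdgeSet (p.claimed makerTurn)) H

/-!
By `2 ^ κ = κ⁺`, the subsets of `A` and the vertices of `B` can both be listed in order type `κ⁺`;
the at most `κ` sets listed before a vertex `b` become the tasks at `b`, indexed below `κ`. When
Maker claims an edge at `b`, Breaker claims a free edge between `b` and the least task at `b`
that he has not blocked yet. If Maker owned all edges between `b` and its `i`-th task `X`, each
of those edges except possibly the last would be answered at its own task `j < i`, so `|X| < κ`.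
So if Maker owned a copy of `K_{κ,κ⁺}` with `κ`-side `X`, all `κ⁺` vertices of its other side
would be listed no later than `X`, which is absurd.
-/

noncomputable section

open Function SimpleGraph Sum

theorem breakerTurn_succ_of_makerTurn {γ : Ordinal.{u}} (h : makerTurn γ) :
    breakerTurn (Order.succ γ) := by
  unfold makerTurn at h
  unfold breakerTurn
  rw [Order.succ_eq_add_one, ← Ordinal.div_add_mod γ 2, h, add_zero,
    Ordinal.mul_add_mod_self, Ordinal.mod_eq_of_lt one_lt_two]

theorem not_breakerTurn_of_makerTurn {γ : Ordinal.{u}} (h : makerTurn γ) : ¬ breakerTurn γ := by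
  unfold makerTurn at h
  unfold breakerTurn
  simp [h]

namespace MBStrategy

variable {α : Type u}

open Classical in
def ofSpec [Nonempty α] (board : Set α) (P : ∀ γ : Ordinal.{u}, (∀ β, β < γ → α) → α → Prop) :
    MBStrategy α := fun γ hist =>
  if h : ∃ e, P γ hist e then h.choose
  else if h : ∃ e ∈ board, ∀ β hβ, hist β hβ ≠ e then h.choose
  else Classical.arbitrary α

variable [Nonempty α] {board : Set α} {P : ∀ γ : Ordinal.{u}, (∀ β, β < γ → α) → α → Prop}

theorem ofSpec_spec {γ : Ordinal.{u}} {hist : ∀ β, β < γ → α} (h : ∃ e, P γ hist e) :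
    P γ hist (ofSpec board P γ hist) := by
  rw [ofSpec, dif_pos h]
  exact h.choose_spec

theorem isLegal_ofSpec (hP : ∀ γ hist e, P γ hist e → e ∈ board ∧ ∀ β hβ, hist β hβ ≠ e)
    (turns : Ordinal.{u} → Prop) : (ofSpec board P).IsLegal board turns := by
  intro γ hist _ _ _ hfree
  unfold ofSpec
  split_ifs with h
  · exact hP _ _ _ h.choose_spec
  · exact hfree.choose_spec

end MBStrategy

namespace MBPlay

variable {α : Type u} {board : Set α} (p : MBPlay board)

def history {γ : Ordinal.{u}} (hγ : γ < p.len) : ∀ β, β < γ → α :=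
  fun β hβ => p.move β (hβ.trans hγ)

theorem claimed_subset (turns : Ordinal.{u} → Prop) : p.claimed turns ⊆ board := by
  rintro _ ⟨γ, hγ, -, rfl⟩
  exact p.move_mem γ hγ

theorem move_notMem_claimed_makerTurn {γ : Ordinal.{u}} (hγ : γ < p.len) (hb : breakerTurn γ) :
    p.move γ hγ ∉ p.claimed makerTurn := by
  rintro ⟨γ', hγ', hm, he⟩
  obtain rfl := p.move_inj _ _ _ _ he
  exact not_breakerTurn_of_makerTurn hm hb

theorem move_congr {γ γ' : Ordinal.{u}}
    (h : γ = γ') (hγ : γ < p.len) (hγ' : γ' < p.len) : p.move γ hγ = p.move γ' hγ' := by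
  subst h
  rfl

end MBPlay

instance {α : Type u} [Nonempty α] : Nonempty (Sym2 α) := ‹Nonempty α›.map fun a => s(a, a)

theorem Sym2.inl_inr_eq_iff {A B : Type u} {a a' : A} {b b' : B} :
    (s(inl a, inr b) : Sym2 (A ⊕ B)) = s(inl a', inr b') ↔ a = a' ∧ b = b' := by
  simp

theorem exists_injective_of_containsCopy_completeBipartiteGraph {A B : Type u} [Nonempty A]
    [Nonempty B] (hAB : #A < #B) {M : Set (Sym2 (A ⊕ B))}
    (hM : M ⊆ (completeBipartiteGraph A B).edgeSet)
    (h : ContainsCopy (fromEdgeSet M) (completeBipartiteGraph A B)) :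
    ∃ (u : A → A) (v : B → B), Injective u ∧ Injective v ∧
      ∀ a b, s(inl (u a), inr (v b)) ∈ M := by
  obtain ⟨f, hf⟩ := h
  have hmem (a : A) (b : B) : s(f (inl a), f (inr b)) ∈ M :=
    ((fromEdgeSet_adj M).1 (f.map_adj (by simp))).1
  have hadj (a : A) (b : B) : (completeBipartiteGraph A B).Adj (f (inl a)) (f (inr b)) :=
    hM (hmem a b)
  obtain ⟨a₀⟩ := ‹Nonempty A›
  obtain ⟨b₀⟩ := ‹Nonempty B›
  rcases h₀ : f (inl a₀) with x₀ | y₀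
  · have hv (b : B) : ∃ y, f (inr b) = inr y := by
      simpa [h₀, Sum.isRight_iff] using hadj a₀ b
    choose v hv using hv
    have hu (a : A) : ∃ x, f (inl a) = inl x := by
      simpa [hv b₀, Sum.isLeft_iff] using hadj a b₀
    choose u hu using hu
    refine ⟨u, v, fun a a' h => inl_injective (hf ?_), fun b b' h => inr_injective (hf ?_),
      fun a b => ?_⟩
    · rw [hu, hu, h]
    · rw [hv, hv, h]
    · simpa [hu, hv] using hmem a b
  · have hw (b : B) : ∃ x, f (inr b) = inl x := by
      simpa [h₀, Sum.isLeft_iff] using hadj a₀ b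
    choose w hw using hw
    have hinj : Injective w := fun b b' h => inr_injective (hf (by rw [hw, hw, h]))
    exact absurd (mk_le_of_injective hinj) hAB.not_ge

section Blocking

variable {A B I : Type u} (F : B → I → Set A)

/-- Think of `F b i` as the `i`-th set of `A`-vertices that Breaker must keep Maker from joining
completely to `b`. In a position, task `i` at `b` is open if Breaker has no edge between
`F b i` and `b` yet, but one of these edges is still free. -/
def openTasks {γ : Ordinal.{u}} (hist : ∀ β, β < γ → Sym2 (A ⊕ B)) (b : B) : Set I :=
  {i | (∀ β hβ, breakerTurn β → ∀ a ∈ F b i, hist β hβ ≠ s(inl a, inr b)) ∧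
    ∃ a ∈ F b i, ∀ β hβ, hist β hβ ≠ s(inl a, inr b)}

section

variable {F} {p : MBPlay (completeBipartiteGraph A B).edgeSet} {b : B} {i : I}

theorem mem_openTasks_of_forall_mem_claimed_makerTurn
    (hmaker : ∀ a ∈ F b i, s(inl a, inr b) ∈ p.claimed makerTurn)
    {γ : Ordinal.{u}} (hγ : γ < p.len) {a : A} (ha : a ∈ F b i) {β₀ : Ordinal.{u}}
    (hβ₀ : β₀ < p.len) (hle : γ ≤ β₀) (hmove : p.move β₀ hβ₀ = s(inl a, inr b)) :
    i ∈ openTasks F (p.history hγ) b := by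
  refine ⟨fun β hβ hbr a₀ ha₀ heq => ?_, a, ha, fun β hβ heq => ?_⟩
  · exact p.move_notMem_claimed_makerTurn _ hbr (heq ▸ hmaker a₀ ha₀)
  · exact (hβ.trans_le hle).ne (p.move_inj _ _ _ _ (heq.trans hmove.symm))

end

variable [LinearOrder I]

/-- Breaker answers Maker's last edge `ab` with a free edge `a'b` towards the least open
task at `b`. -/
def IsBlockingAnswer (γ : Ordinal.{u}) (hist : ∀ β, β < γ → Sym2 (A ⊕ B))
    (e : Sym2 (A ⊕ B)) : Prop :=
  ∃ (δ : Ordinal.{u}) (hδ : δ < γ) (a a' : A) (b : B) (i : I), γ = Order.succ δ ∧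
    hist δ hδ = s(inl a, inr b) ∧ IsLeast (openTasks F hist b) i ∧ a' ∈ F b i ∧
    (∀ β hβ, hist β hβ ≠ s(inl a', inr b)) ∧ e = s(inl a', inr b)

variable [Nonempty A]

def blockingStrategy : MBStrategy (Sym2 (A ⊕ B)) :=
  MBStrategy.ofSpec (completeBipartiteGraph A B).edgeSet (IsBlockingAnswer F)

theorem isLegal_blockingStrategy :
    (blockingStrategy F).IsLegal (completeBipartiteGraph A B).edgeSet breakerTurn := by
  refine MBStrategy.isLegal_ofSpec ?_ _
  rintro γ hist _ ⟨δ, hδ, a, a', b, i, -, -, -, -, hfree, rfl⟩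
  exact ⟨by simp, hfree⟩

variable [WellFoundedLT I] {F} {p : MBPlay (completeBipartiteGraph A B).edgeSet} {b : B} {i : I}

theorem exists_blockingAnswer (hp : p.Follows breakerTurn (blockingStrategy F))
    {x : Ordinal.{u}} (hx : Order.succ x < p.len) (hmx : makerTurn x) {a : A}
    (hab : p.move x ((Order.lt_succ x).trans hx) = s(inl a, inr b))
    (hi : i ∈ openTasks F (p.history hx) b) :
    ∃ j ≤ i, j ∈ openTasks F (p.history hx) b ∧
      ∃ a' ∈ F b j, p.move (Order.succ x) hx = s(inl a', inr b) := by
  have hex : ∃ e, IsBlockingAnswer F (Order.succ x) (p.history hx) e := by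
    obtain ⟨j, hj, hmin⟩ := wellFounded_lt.has_min _ ⟨i, hi⟩
    obtain ⟨a', ha', hfree⟩ := hj.2
    exact ⟨_, x, Order.lt_succ x, a, a', b, j, rfl, hab, ⟨hj, fun k hk => not_lt.1 (hmin k hk)⟩,
      ha', hfree, rfl⟩
  obtain ⟨δ, hδ, a₀, a', b₀, j, hsucc, hlast, hleast, ha', -, hmove⟩ :=
    MBStrategy.ofSpec_spec (board := (completeBipartiteGraph A B).edgeSet) hex
  obtain rfl := Order.succ_injective hsucc
  obtain ⟨-, rfl⟩ := Sym2.inl_inr_eq_iff.1 (hlast.symm.trans hab)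
  exact ⟨j, hleast.2 hi, hleast.1, a', ha',
    (hp _ hx (breakerTurn_succ_of_makerTurn hmx)).trans hmove⟩

theorem exists_lt_blockingAnswer (hp : p.Follows breakerTurn (blockingStrategy F))
    (hmaker : ∀ a ∈ F b i, s(inl a, inr b) ∈ p.claimed makerTurn)
    {x : Ordinal.{u}} (hx : x < p.len) (hmx : makerTurn x) {a : A}
    (hab : p.move x hx = s(inl a, inr b)) {y : Ordinal.{u}} (hy : y < p.len) (hxy : x < y)
    {a'' : A} (ha'' : a'' ∈ F b i) (hmove'' : p.move y hy = s(inl a'', inr b)) :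
    ∃ (h : Order.succ x < p.len) (j : I), j < i ∧ j ∈ openTasks F (p.history h) b ∧
      ∃ a' ∈ F b j, p.move (Order.succ x) h = s(inl a', inr b) := by
  have h : Order.succ x < p.len := (Order.succ_le_of_lt hxy).trans_lt hy
  have hi := mem_openTasks_of_forall_mem_claimed_makerTurn hmaker h ha'' hy
    (Order.succ_le_of_lt hxy) hmove''
  obtain ⟨j, hji, hj, a', ha', hmove⟩ := exists_blockingAnswer hp h hmx hab hi
  refine ⟨h, j, hji.lt_of_ne ?_, hj, a', ha', hmove⟩
  rintro rfl
  exact p.move_notMem_claimed_makerTurn h (breakerTurn_succ_of_makerTurn hmx)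
    (hmove ▸ hmaker a' ha')

/-- Distinct answers go to distinct tasks `j < i`, since an answered task is closed. -/
theorem mk_le_mk_Iio_add_one_of_forall_mem_claimed_makerTurn
    (hp : p.Follows breakerTurn (blockingStrategy F))
    (hmaker : ∀ a ∈ F b i, s(inl a, inr b) ∈ p.claimed makerTurn) :
    #(F b i) ≤ #(Set.Iio i) + 1 := by
  have hturn (a : F b i) : ∃ γ h, makerTurn γ ∧ p.move γ h = s(inl a.1, inr b) := hmaker a a.2
  choose t ht hmt hmove using hturn
  have t_inj : Injective t := fun a₁ a₂ h => Subtype.ext (Sym2.inl_inr_eq_iff.1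
    ((hmove a₁).symm.trans ((p.move_congr h _ _).trans (hmove a₂)))).1
  let L : Set (F b i) := {a | ∃ a', t a < t a'}
  have hanswer (a : L) : ∃ (h : Order.succ (t a) < p.len) (j : I), j < i ∧
      j ∈ openTasks F (p.history h) b ∧
      ∃ a' ∈ F b j, p.move (Order.succ (t a)) h = s(inl a', inr b) :=
    exists_lt_blockingAnswer hp hmaker _ (hmt a) (hmove a) _ a.2.choose_spec a.2.choose.2
      (hmove a.2.choose)
  choose hlen j hji hjopen a' ha' hmove' using hanswer
  have hj_ne (a₁ a₂ : L) (hlt : t a₁ < t a₂) : j a₁ ≠ j a₂ := fun heq =>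
    (hjopen a₂).1 _ (Order.succ_lt_succ hlt) (breakerTurn_succ_of_makerTurn (hmt a₁)) (a' a₁)
      (heq ▸ ha' a₁) (hmove' a₁)
  have hj_inj : Injective fun a : L => (⟨j a, hji a⟩ : Set.Iio i) := by
    intro a₁ a₂ h
    have h' : j a₁ = j a₂ := congrArg Subtype.val h
    rcases lt_trichotomy (t a₁) (t a₂) with hlt | heq | hgt
    · exact absurd h' (hj_ne _ _ hlt)
    · exact Subtype.ext (t_inj heq)
    · exact absurd h'.symm (hj_ne _ _ hgt)
  have hLc : (Lᶜ).Subsingleton := fun a₁ h₁ a₂ h₂ =>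
    t_inj (le_antisymm (not_lt.1 fun h => h₂ ⟨a₁, h⟩) (not_lt.1 fun h => h₁ ⟨a₂, h⟩))
  calc #(F b i) = #L + #(Lᶜ : Set (F b i)) := (mk_sum_compl L).symm
    _ ≤ #(Set.Iio i) + 1 :=
      add_le_add (mk_le_of_injective hj_inj) (mk_le_one_iff_set_subsingleton.2 hLc)

end Blocking

theorem exists_family_mk_setOf_notMem_range_le {S B : Type u} [Nonempty S] {κ : Cardinal.{u}}
    (hκ : ℵ₀ ≤ κ) (hS : #S ≤ Order.succ κ) (hB : #B ≤ Order.succ κ) :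
    ∃ F : B → κ.ord.ToType → S, ∀ X, #{b | X ∉ Set.range (F b)} ≤ κ := by
  -- well-order `S` and `B` in type `κ⁺`, and let `F b` enumerate the `X` that come before `b`
  obtain ⟨eS⟩ : Nonempty (S ↪ (Order.succ κ).ord.ToType) := by rwa [← le_def, mk_ord_toType]
  obtain ⟨eB⟩ : Nonempty (B ↪ (Order.succ κ).ord.ToType) := by rwa [← le_def, mk_ord_toType]
  have hIio (w : (Order.succ κ).ord.ToType) : #(Set.Iio w) ≤ κ :=
    Order.lt_succ_iff.1 (by simpa using mk_Iio_lt w (by simp))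
  have hearlier (b : B) : Nonempty ({X | eS X < eB b} ↪ κ.ord.ToType) := by
    rw [← le_def, mk_ord_toType]
    refine le_trans (mk_le_of_injective (f := fun X => (⟨eS X, X.2⟩ : Set.Iio (eB b)))
      fun X X' h => Subtype.ext (eS.injective (congrArg Subtype.val h))) (hIio _)
  have j (b : B) := (hearlier b).some
  refine ⟨fun b => extend (j b) Subtype.val fun _ => Classical.arbitrary S, fun X => ?_⟩
  have hsub : {b | X ∉ Set.range (extend (j b) Subtype.val fun _ => Classical.arbitrary S)} ⊆
      {b | eB b ≤ eS X} := fun b hb =>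
    not_lt.1 fun (hlt : eS X < eB b) => hb ⟨j b ⟨X, hlt⟩, (j b).injective.extend_apply _ _ _⟩
  calc _ ≤ #{b | eB b ≤ eS X} := mk_le_mk_of_subset hsub
    _ ≤ #(Set.Iic (eS X)) := mk_le_of_injective (f := fun b => (⟨eB b, b.2⟩ : Set.Iic (eS X)))
      fun b b' h => Subtype.ext (eB.injective (congrArg Subtype.val h))
    _ ≤ κ := by
      rw [← Set.Iio_insert]
      exact mk_insert_le.trans ((add_le_add_left (hIio _) 1).trans (add_one_eq hκ).le)

/-- Let `κ` be an infinite cardinal with `2 ^ κ = κ⁺` (an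
instance of GCH).  Then Breaker has a winning strategy in the Maker–Breaker
game `MB(K_{κ,κ⁺}, K_{κ,κ⁺})`. -/
theorem breakerWins_completeBipartite_self
    (κ : Cardinal.{u}) (hκ : ℵ₀ ≤ κ) (hGCH : 2 ^ κ = Order.succ κ)
    (A B : Type u) (hA : #A = κ) (hB : #B = Order.succ κ) :
    BreakerWins (completeBipartiteGraph A B) (completeBipartiteGraph A B) := by
  have : Nonempty A := mk_ne_zero_iff.1 (by rw [hA]; exact (aleph0_pos.trans_le hκ).ne')
  have : Nonempty B := mk_ne_zero_iff.1 (by rw [hB]; exact (Order.bot_lt_succ κ).ne')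
  obtain ⟨F, hF⟩ := exists_family_mk_setOf_notMem_range_le (S := Set A) hκ
    (by rw [mk_set, hA, hGCH]) hB.le
  refine ⟨blockingStrategy F, isLegal_blockingStrategy F, fun p hp hcopy => ?_⟩
  obtain ⟨u, v, hu, hv, huv⟩ := exists_injective_of_containsCopy_completeBipartiteGraph
    (by rw [hA, hB]; exact Order.lt_succ κ) (p.claimed_subset _) hcopy
  have hblocked (b : B) (i : κ.ord.ToType) : F (v b) i ≠ Set.range u := by
    intro hi
    have h := mk_le_mk_Iio_add_one_of_forall_mem_claimed_makerTurn hp (b := v b) (i := i)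
      (by rw [hi]; rintro _ ⟨a, rfl⟩; exact huv a b)
    rw [hi, mk_range_eq u hu, hA] at h
    exact h.not_gt (add_lt_of_lt hκ (by simpa using mk_Iio_lt i (by simp))
      (one_lt_aleph0.trans_le hκ))
  have hv_sub : Set.range v ⊆ {b | Set.range u ∉ Set.range (F b)} := by
    rintro _ ⟨b, rfl⟩ ⟨i, hi⟩
    exact hblocked b i hi
  have h := (mk_le_mk_of_subset hv_sub).trans (hF _)
  rw [mk_range_eq v hv, hB] at h
  exact h.not_gt (Order.lt_succ κ)
end
end

section
/- Let κ be an infinite cardinal and assume 2^κ = κ⁺ (an instance of GCH). Then Breaker has a winning strategy in the Maker-Breaker game MB(K_{κ⁺}, K_{κ⁺}). -/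
/-!
Well-order `V` in type `κ⁺`, so that every vertex has at most `κ` predecessors. As
`(κ⁺)^κ = 2^κ = κ⁺`, the `κ`-subsets of `V` can be indexed injectively by vertices. Below any
vertex `b` lie the indices of at most `κ` of them, so choosing disjoint pairs, one inside each of
these sets, gives an involution `ι_b` of `V` moving a point of each such set inside it. Breaker
pairs the edge `{a, b}`, `a < b`, with `{ι_b a, b}` and answers every Maker move by its partner.
If Maker's graph contained a `K_{κ⁺}` on `A`, pick a `κ`-subset `S ⊆ A` and, by regularity of
`κ⁺`, a vertex `b ∈ A` above `S` and above the index of `S`: some `a ∈ S` has `ι_b a ∈ S`, and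
Maker would own both edges `{a, b}` and `{ι_b a, b}` of a pair.
-/

open Cardinal

universe u v

open Function Set
open scoped Ordinal

section DistinctRepresentatives

variable {α β : Type u}

theorem exists_injective_forall_mem_of_mk_Iio_lt [LinearOrder α] [WellFoundedLT α]
    (T : α → Set β) (hT : ∀ i, #(Iio i) < #(T i)) :
    ∃ f : α → β, Injective f ∧ ∀ i, f i ∈ T i := by
  have step : ∀ i (g : ∀ j, j < i → β), ∃ x ∈ T i, ∀ j hj, g j hj ≠ x := by
    intro i g
    by_contra! h
    have hsub : T i ⊆ range fun j : Iio i => g j j.2 := fun x hx => by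
      obtain ⟨j, hj, rfl⟩ := h x hx
      exact ⟨⟨j, hj⟩, rfl⟩
    exact (hT i).not_ge ((mk_le_mk_of_subset hsub).trans mk_range_le)
  choose F hF_mem hF_ne using step
  set f := wellFounded_lt.fix F
  have hf : ∀ i, f i = F i fun j _ => f j := wellFounded_lt.fix_eq F
  refine ⟨f, Injective.of_lt_imp_ne fun i j hij => ?_, fun i => hf i ▸ hF_mem _ _⟩
  rw [hf j]
  exact hF_ne j (fun k _ => f k) i hij

theorem exists_injective_forall_mem (T : α → Set β) (hT : ∀ i, #α ≤ #(T i)) :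
    ∃ f : α → β, Injective f ∧ ∀ i, f i ∈ T i := by
  obtain ⟨e⟩ : Nonempty (α ≃ (#α).ord.ToType) := Cardinal.eq.1 (mk_ord_toType _).symm
  obtain ⟨f, hf, hfT⟩ := exists_injective_forall_mem_of_mk_Iio_lt (T ∘ e.symm) fun i =>
    (mk_Iio_lt i (by simp)).trans_le ((mk_ord_toType _).trans_le (hT _))
  exact ⟨f ∘ e, hf.comp e.injective, fun i => by simpa using hfT (e i)⟩

end DistinctRepresentatives

theorem exists_involutive_forall_exists_apply_ne_mem {α : Type u} {κ : Cardinal.{u}}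
    (hκ : ℵ₀ ≤ κ) (𝒜 : Set (Set α)) (h𝒜 : #𝒜 ≤ κ) (hA : ∀ A ∈ 𝒜, κ ≤ #A) :
    ∃ ι : α → α, Involutive ι ∧ ∀ A ∈ 𝒜, ∃ a ∈ A, ι a ≠ a ∧ ι a ∈ A := by
  classical
  have hcard : #(𝒜 ⊕ 𝒜) ≤ κ := by
    rw [mk_sum, lift_id]
    exact add_le_of_le hκ h𝒜 h𝒜
  obtain ⟨f, hf, hfA⟩ := exists_injective_forall_mem (Sum.elim Subtype.val Subtype.val)
    fun i => hcard.trans <| by cases i <;> exact hA _ (Subtype.property _)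
  set ι := Equiv.Perm.extendDomain (Equiv.sumComm 𝒜 𝒜) (Equiv.ofInjective f hf)
  have hι : ∀ i, ι (f i) = f i.swap := Equiv.Perm.extendDomain_apply_image _ _
  refine ⟨ι, fun x => ?_, fun A hA => ⟨f (.inl ⟨A, hA⟩), hfA (.inl ⟨A, hA⟩), ?_, ?_⟩⟩
  · by_cases hx : x ∈ range f
    · obtain ⟨i, rfl⟩ := hx
      rw [hι, hι, Sum.swap_swap]
    · rw [Equiv.Perm.extendDomain_apply_not_subtype _ _ hx,
        Equiv.Perm.extendDomain_apply_not_subtype _ _ hx]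
  · rw [hι]
    exact hf.ne Sum.inr_ne_inl
  · rw [hι]
    exact hfA (.inr ⟨A, hA⟩)

theorem exists_mem_forall_lt_of_mk_lt {α : Type u} [LinearOrder α] [WellFoundedLT α]
    (hα : (#α).ord = typeLT α) (hreg : (#α).IsRegular) {T A : Set α} (hT : #T < #α)
    (hA : #A = #α) : ∃ b ∈ A, ∀ t ∈ T, t < b := by
  have hcof : Order.cof α = #α := by rw [← Ordinal.cof_type, ← hα, hreg.cof_ord]
  obtain ⟨c, hc⟩ := not_isCofinal_iff.1 fun h => (Order.cof_le h).not_gt (hcof ▸ hT)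
  obtain ⟨b, hbA, hcb⟩ : ∃ b ∈ A, c ≤ b := by
    by_contra! h
    exact (mk_Iio_lt c hα).not_ge (hA ▸ mk_le_mk_of_subset h)
  exact ⟨b, hbA, fun t ht => (hc t ht).trans_le hcb⟩

theorem mk_bounded_set_le_of_two_power_eq_succ {α : Type u} {κ : Cardinal.{u}} (hκ : ℵ₀ ≤ κ)
    (hGCH : 2 ^ κ = Order.succ κ) (hα : #α = Order.succ κ) : #{A : Set α // #A ≤ κ} ≤ #α := by
  have hinf : ℵ₀ ≤ #α := hα ▸ hκ.trans (Order.le_succ κ)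
  calc #{A : Set α // #A ≤ κ} ≤ max #α ℵ₀ ^ κ := mk_bounded_set_le α κ
    _ = #α := by rw [max_eq_left hinf, hα, ← hGCH, ← power_mul, mul_eq_self hκ]

def edgePairing {α : Type u} [LinearOrder α] (ι : α → α → α) : Sym2 α → Sym2 α :=
  Sym2.lift ⟨fun a c => s(ι (max a c) (min a c), max a c),
    fun a c => by dsimp only; rw [max_comm, min_comm]⟩

theorem edgePairing_mk_of_lt {α : Type u} [LinearOrder α] (ι : α → α → α) {a c : α} (h : a < c) :
    edgePairing ι s(a, c) = s(ι c a, c) := by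
  simp [edgePairing, h.le]

theorem exists_edge_pairing_inside_large_sets {α : Type u} {κ : Cardinal.{u}} (hκ : ℵ₀ ≤ κ)
    (hGCH : 2 ^ κ = Order.succ κ) (hα : #α = Order.succ κ) :
    ∃ π : Sym2 α → Sym2 α, ∀ A : Set α, #A = Order.succ κ →
      ∃ a ∈ A, ∃ a' ∈ A, ∃ b ∈ A, a ≠ a' ∧ a ≠ b ∧ a' ≠ b ∧
        π s(a, b) = s(a', b) ∧ π s(a', b) = s(a, b) := by
  obtain ⟨_, _, hord⟩ := exists_ord_eq_type_lt α
  have hreg : (#α).IsRegular := hα ▸ isRegular_succ hκ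
  have hIio (b : α) : #(Iio b) ≤ κ := Order.lt_succ_iff.1 (hα ▸ mk_Iio_lt b hord)
  obtain ⟨idx⟩ := Cardinal.le_def _ _ |>.1 (mk_bounded_set_le_of_two_power_eq_succ hκ hGCH hα)
  have hfew (b : α) : #{A : Set α | κ ≤ #A ∧ ∃ h : #A ≤ κ, idx ⟨A, h⟩ < b} ≤ κ := by
    refine (mk_le_mk_of_subset ?_).trans <| (mk_image_le (f := Subtype.val)).trans <|
      (mk_preimage_of_injective idx (Iio b) idx.injective).trans (hIio b)
    exact fun A ⟨_, h, hA⟩ => ⟨⟨A, h⟩, hA, rfl⟩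
  choose ι hιinv hι using fun b => exists_involutive_forall_exists_apply_ne_mem hκ _ (hfew b)
    fun A hA => hA.1
  refine ⟨edgePairing ι, fun A hA => ?_⟩
  obtain ⟨S, hSA, hS⟩ := le_mk_iff_exists_subset.1 (hA ▸ Order.le_succ κ)
  have hT : #(insert (idx ⟨S, hS.le⟩) S : Set α) < #α := calc
    _ ≤ #S + 1 := mk_insert_le
    _ = κ := by rw [hS, add_one_eq hκ]
    _ < #α := hα ▸ Order.lt_succ_of_not_isMax (not_isMax κ)
  obtain ⟨b, hbA, hb⟩ := exists_mem_forall_lt_of_mk_lt hord hreg hT (hA.trans hα.symm)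
  have hlt (x) (hx : x ∈ S) : x < b := hb x (mem_insert_of_mem _ hx)
  obtain ⟨a, haS, hne, ha'S⟩ := hι b S ⟨hS.ge, hS.le, hb _ (mem_insert _ _)⟩
  refine ⟨a, hSA haS, ι b a, hSA ha'S, b, hbA, hne.symm, (hlt a haS).ne, (hlt _ ha'S).ne,
    edgePairing_mk_of_lt ι (hlt a haS), ?_⟩
  rw [edgePairing_mk_of_lt ι (hlt _ ha'S), hιinv b a]

theorem breakerTurn_add_one {γ : Ordinal.{u}} (h : makerTurn γ) : breakerTurn (γ + 1) := by
  have h2 : 2 * (γ / 2) + γ % 2 = γ := Ordinal.div_add_mod γ 2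
  rw [show γ % 2 = 0 from h, add_zero] at h2
  rw [breakerTurn, ← h2, Ordinal.mul_add_mod_self]
  exact Ordinal.mod_eq_of_lt one_lt_two

section Pairing

variable {α : Type u}

def unclaimed (B : Set α) {γ : Ordinal.{u}} (hist : ∀ β < γ, α) : Set α :=
  {e ∈ B | ∀ β hβ, hist β hβ ≠ e}

open Classical in
noncomputable def pairingStrategy [Nonempty α] (B : Set α) (π : α → α) : MBStrategy α :=
  fun γ hist =>
    if h : ∃ δ, ∃ hδ : δ < γ, δ + 1 = γ ∧ π (hist δ hδ) ∈ unclaimed B hist then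
      π (hist h.choose h.choose_spec.choose)
    else if h' : (unclaimed B hist).Nonempty then h'.some else Classical.arbitrary α

variable [Nonempty α] {B : Set α} {π : α → α}

theorem pairingStrategy_mem_unclaimed {γ : Ordinal.{u}} {hist : ∀ β < γ, α}
    (h : (unclaimed B hist).Nonempty) : pairingStrategy B π γ hist ∈ unclaimed B hist := by
  unfold pairingStrategy
  split_ifs with h₁
  · exact h₁.choose_spec.choose_spec.2
  · exact h.some_mem

theorem pairingStrategy_add_one {δ : Ordinal.{u}} {hist : ∀ β < δ + 1, α}
    (h : π (hist δ (Order.lt_add_one_iff.2 le_rfl)) ∈ unclaimed B hist) :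
    pairingStrategy B π (δ + 1) hist = π (hist δ (Order.lt_add_one_iff.2 le_rfl)) := by
  have hex : ∃ δ', ∃ hδ' : δ' < δ + 1, δ' + 1 = δ + 1 ∧ π (hist δ' hδ') ∈ unclaimed B hist :=
    ⟨δ, _, rfl, h⟩
  obtain ⟨-, heq, -⟩ := hex.choose_spec
  rw [pairingStrategy, dif_pos hex]
  congr 2
  exact Order.add_one_inj.1 heq

theorem isLegal_pairingStrategy : (pairingStrategy B π).IsLegal B breakerTurn :=
  fun _ _ _ _ _ ⟨e, he, hfree⟩ => pairingStrategy_mem_unclaimed ⟨e, he, hfree⟩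

theorem eq_of_mem_claimed_of_follows_pairingStrategy (p : MBPlay B)
    (hp : p.Follows breakerTurn (pairingStrategy B π))
    {e e' : α} (he : e ∈ p.claimed makerTurn) (he' : e' ∈ p.claimed makerTurn)
    (h : π e = e') (h' : π e' = e) : e = e' := by
  -- A Maker move `π e` after Maker's move `e` is impossible: Breaker takes `π e` at once.
  have key : ∀ γ₁ h₁ γ₂ h₂, γ₁ < γ₂ → makerTurn γ₁ → makerTurn γ₂ →
      π (p.move γ₁ h₁) ≠ p.move γ₂ h₂ := by
    intro γ₁ h₁ γ₂ h₂ hlt hm₁ hm₂ hπ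
    have hle : γ₁ + 1 ≤ γ₂ := Order.add_one_le_of_lt hlt
    have hlen : γ₁ + 1 < p.len := hle.trans_lt h₂
    have hfree : π (p.move γ₁ h₁) ∈ unclaimed B fun β hβ => p.move β (hβ.trans hlen) :=
      hπ ▸ ⟨p.move_mem _ _, fun β hβ hβ₂ => (p.move_inj _ _ _ _ hβ₂ ▸ hβ).not_ge hle⟩
    have hmove : p.move (γ₁ + 1) hlen = p.move γ₂ h₂ := by
      rw [hp _ hlen (breakerTurn_add_one hm₁), pairingStrategy_add_one hfree, hπ]
    have hγ₂ := p.move_inj _ _ _ _ hmove ▸ breakerTurn_add_one hm₁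
    exact zero_ne_one (hm₂.symm.trans hγ₂)
  obtain ⟨γ₁, h₁, hm₁, rfl⟩ := he
  obtain ⟨γ₂, h₂, hm₂, rfl⟩ := he'
  rcases lt_trichotomy γ₁ γ₂ with hlt | rfl | hlt
  · exact absurd h (key _ _ _ _ hlt hm₁ hm₂)
  · rfl
  · exact absurd h' (key _ _ _ _ hlt hm₂ hm₁)

end Pairing

theorem ContainsCopy.exists_isClique {α β : Type u} {G : SimpleGraph α}
    (h : ContainsCopy G (⊤ : SimpleGraph β)) : ∃ A : Set α, #A = #β ∧ G.IsClique A := by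
  obtain ⟨f, hf⟩ := h
  refine ⟨range f, mk_range_eq f hf, ?_⟩
  rintro _ ⟨u, rfl⟩ _ ⟨v, rfl⟩ hne
  exact f.map_adj ((SimpleGraph.top_adj u v).2 (ne_of_apply_ne f hne))

/-- Let `κ` be an infinite cardinal with `2 ^ κ = κ⁺` (an
instance of GCH).  Then Breaker has a winning strategy in the Maker–Breaker
game `MB(K_{κ⁺}, K_{κ⁺})`. -/
theorem breakerWins_complete_succ_self
    (κ : Cardinal.{u}) (hκ : ℵ₀ ≤ κ) (hGCH : 2 ^ κ = Order.succ κ)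
    (V : Type u) (hV : #V = Order.succ κ) :
    BreakerWins (⊤ : SimpleGraph V) (⊤ : SimpleGraph V) := by
  have : Nonempty (Sym2 V) := (mk_ne_zero_iff.1 (hV ▸ succ_ne_zero κ)).map Sym2.diag
  obtain ⟨π, hπ⟩ := exists_edge_pairing_inside_large_sets hκ hGCH hV
  refine ⟨pairingStrategy _ π, isLegal_pairingStrategy, fun p hp hcopy => ?_⟩
  obtain ⟨A, hA, hclique⟩ := hcopy.exists_isClique
  obtain ⟨a, ha, a', ha', b, hb, haa', hab, ha'b, h₁, h₂⟩ := hπ A (hA.trans hV)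
  have hclaimed {x} (hx : x ∈ A) (hxb : x ≠ b) : s(x, b) ∈ p.claimed makerTurn :=
    ((SimpleGraph.fromEdgeSet_adj _).1 (hclique hx hb hxb)).1
  exact haa' <| Sym2.congr_left.1 <|
    eq_of_mem_claimed_of_follows_pairingStrategy p hp (hclaimed ha hab) (hclaimed ha' ha'b) h₁ h₂
end

section
/- Let κ be a cardinal of uncountable cofinality and assume that every family of at most κ infinite subsets of ℕ with the strong finite intersection property has an infinite pseudo-intersection (i.e. κ < 𝔭). Then Maker has a winning strategy in the Maker-Breaker game MB(K_{ω,κ}, K_{ω,κ}). -/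
open Cardinal

universe u v

/-- The family `F` of subsets of `ℕ` has the strong finite intersection
property: the intersection of any finitely many members of `F` is infinite. -/
def HasSFIP (F : Set (Set ℕ)) : Prop :=
  ∀ S : Finset (Set ℕ), ↑S ⊆ F → (⋂₀ (↑S : Set (Set ℕ))).Infinite


/-! Maker plays in rounds `α < κ`, round `α` being the `ω` turns `ω * α + n`. At the start of a
round fewer than `κ` edges are claimed, so some `b_α ∈ B` has no claimed edge yet; during the round
Maker joins `b_α` to infinitely many vertices of a reservoir `R_α ⊆ ℕ`, an infinite
pseudo-intersection of the sets `D_β` of vertices joined to `b_β` in the earlier rounds. As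
`D_α ⊆ R_α`, the `D_α` are infinite and almost decreasing, so they have the strong finite
intersection property and, by `κ < 𝔭`, the reservoirs exist. Finally a pseudo-intersection `P` of
all `D_α` misses each `D_α` in a finite set; by uncountable cofinality one finite set `s` serves
`κ` many `α`, and `P \ s` with those `b_α` spans a copy of `K_{ω,κ}` in Maker's graph. -/

open Set

noncomputable section

theorem Cardinal.mk_image_Iio_le {α : Type u} (f : Ordinal.{u} → α) (o : Ordinal.{u}) :
    #(f '' Iio o) ≤ o.card := by
  have h := (mk_image_le_lift (f := f) (s := Iio o)).trans_eq (congrArg lift (mk_Iio_ordinal o))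
  rwa [lift_lift, lift_le] at h

section Games

variable {α : Type u} [Inhabited α] {board : Set α}

/-- Histories of different lengths are compared as total functions, padded with `default`. -/
def extendHist (γ : Ordinal.{u}) (hist : ∀ β : Ordinal.{u}, β < γ → α) :
    Ordinal.{u} → α :=
  fun β => if h : β < γ then hist β h else default

def MBPlay.moveFun (p : MBPlay board) : Ordinal.{u} → α :=
  extendHist p.len p.move

theorem MBPlay.moveFun_of_lt (p : MBPlay board) {γ : Ordinal.{u}} (h : γ < p.len) :
    p.moveFun γ = p.move γ h :=
  dif_pos h

theorem MBPlay.injOn_moveFun (p : MBPlay board) : InjOn p.moveFun (Iio p.len) := by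
  intro γ₁ h₁ γ₂ h₂ h
  rw [p.moveFun_of_lt h₁, p.moveFun_of_lt h₂] at h
  exact p.move_inj _ _ _ _ h

theorem MBPlay.moveFun_mem_claimed (p : MBPlay board) {turns : Ordinal.{u} → Prop}
    {γ : Ordinal.{u}} (h : γ < p.len) (ht : turns γ) : p.moveFun γ ∈ p.claimed turns :=
  ⟨γ, h, ht, (p.moveFun_of_lt h).symm⟩

theorem MBPlay.mk_board_le (p : MBPlay board) : #board ≤ p.len.card := by
  refine (mk_le_mk_of_subset fun e he => ?_).trans (mk_image_Iio_le p.moveFun p.len)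
  obtain ⟨γ, h, rfl⟩ := p.complete e he
  exact ⟨γ, h, p.moveFun_of_lt h⟩

open Classical in
def MBStrategy.ofRule (board : Set α) (rule : Ordinal.{u} → (Ordinal.{u} → α) → α) :
    MBStrategy α := fun γ hist =>
  if rule γ (extendHist γ hist) ∈ board ∧ ∀ β h, hist β h ≠ rule γ (extendHist γ hist) then
    rule γ (extendHist γ hist)
  else if h : ∃ e ∈ board, ∀ β h, hist β h ≠ e then h.choose else default

theorem MBStrategy.isLegal_ofRule (rule : Ordinal.{u} → (Ordinal.{u} → α) → α)
    (turns : Ordinal.{u} → Prop) : (ofRule board rule).IsLegal board turns := by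
  intro γ hist _ _ _ hex
  unfold ofRule
  split_ifs with h
  · exact h
  · exact hex.choose_spec

theorem MBPlay.Follows.moveFun_eq_rule {p : MBPlay board} {turns : Ordinal.{u} → Prop}
    {rule : Ordinal.{u} → (Ordinal.{u} → α) → α} (hf : p.Follows turns (.ofRule board rule))
    {γ : Ordinal.{u}} (hrule : ∀ c, EqOn c p.moveFun (Iio γ) → rule γ c = rule γ p.moveFun)
    (hγ : γ < p.len) (ht : turns γ) (hmem : rule γ p.moveFun ∈ board)
    (hfresh : rule γ p.moveFun ∉ p.moveFun '' Iio γ) :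
    p.moveFun γ = rule γ p.moveFun := by
  set hist : ∀ β, β < γ → α := fun β hβ => p.move β (hβ.trans hγ)
  have hext : rule γ (extendHist γ hist) = rule γ p.moveFun :=
    hrule _ fun β hβ => (dif_pos hβ).trans (p.moveFun_of_lt (hβ.trans hγ)).symm
  have hlegal : ∀ β h, hist β h ≠ rule γ p.moveFun := fun β h heq =>
    hfresh ⟨β, h, (p.moveFun_of_lt (h.trans hγ)).trans heq⟩
  rw [p.moveFun_of_lt hγ, hf γ hγ ht]
  change MBStrategy.ofRule board rule γ hist = _
  rw [MBStrategy.ofRule, hext, if_pos ⟨hmem, hlegal⟩]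

end Games

section PseudoIntersections

variable {α : Type u}

def IsPseudoIntersection (P : Set α) (F : Set (Set α)) : Prop :=
  P.Infinite ∧ ∀ A ∈ F, (P \ A).Finite

def pseudoIntersection (F : Set (Set α)) : Set α :=
  Classical.epsilon (IsPseudoIntersection · F)

theorem isPseudoIntersection_pseudoIntersection {F : Set (Set α)}
    (h : ∃ P, IsPseudoIntersection P F) : IsPseudoIntersection (pseudoIntersection F) F :=
  Classical.epsilon_spec h

theorem hasSFIP_image_of_diff_finite {ι : Type*} [LinearOrder ι] {D : ι → Set ℕ} {s : Set ι}
    (hinf : ∀ i ∈ s, (D i).Infinite)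
    (hdiff : ∀ i ∈ s, ∀ j ∈ s, i < j → (D j \ D i).Finite) :
    HasSFIP (D '' s) := by
  classical
  intro S hS
  obtain ⟨T, hTs, rfl⟩ := Finset.subset_set_image_iff.mp hS
  rcases T.eq_empty_or_nonempty with rfl | hT
  · simpa using infinite_univ
  obtain ⟨j, hjT, hjmax⟩ : ∃ j ∈ T, ∀ i ∈ T, i ≤ j :=
    ⟨_, T.max'_mem hT, T.le_max'⟩
  have hfin : (⋃ i ∈ T, D j \ D i).Finite := T.finite_toSet.biUnion fun i hi =>
    (hjmax i hi).lt_or_eq.elim (hdiff i (hTs hi) j (hTs hjT)) fun h => by simp [h]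
  refine ((hinf j (hTs hjT)).sdiff hfin).mono ?_
  intro a ⟨haj, ha⟩ X hX
  obtain ⟨i, hi, rfl⟩ := Finset.mem_image.mp hX
  by_contra hai
  exact ha (mem_biUnion hi ⟨haj, hai⟩)

/-- Pigeonhole through uncountable cofinality: the finite exceptional sets `P \ D i` take only
countably many values, so one of them, `s`, is shared by `#ι` many `i`, and `P \ s` works. -/
theorem IsPseudoIntersection.exists_infinite_subset {ι : Type u} [Countable α] {D : ι → Set α}
    {P : Set α} (hP : IsPseudoIntersection P (range D)) (hcf : ℵ₀ < (#ι).ord.cof) :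
    ∃ Q : Set α, Q.Infinite ∧ #ι ≤ #{i | Q ⊆ D i} := by
  have hfin i : (P \ D i).Finite := hP.2 _ (mem_range_self i)
  obtain ⟨s, hs⟩ := infinite_pigeonhole_card (fun i => (hfin i).toFinset) (#ι) le_rfl
    (hcf.le.trans (Ordinal.cof_ord_le _)) (mk_le_aleph0.trans_lt hcf)
  refine ⟨P \ s, hP.1.sdiff s.finite_toSet, hs.trans (mk_le_mk_of_subset ?_)⟩
  rintro i (hi : (hfin i).toFinset = s) a ⟨haP, has⟩
  by_contra had
  exact has (hi ▸ (hfin i).mem_toFinset.mpr ⟨haP, had⟩)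

end PseudoIntersections

theorem containsCopy_completeBipartiteGraph {V A B : Type*} {G : SimpleGraph V} (f : A ↪ V)
    (g : B ↪ V) (h : ∀ a b, G.Adj (f a) (g b)) :
    ContainsCopy G (completeBipartiteGraph A B) := by
  refine ⟨⟨Sum.elim f g, ?_⟩, f.injective.sumElim g.injective fun a b => (h a b).ne⟩
  rintro (a | b) (a' | b') hadj <;> simp at hadj
  · exact h a b'
  · exact (h a' b).symm

namespace Ordinal

theorem omega0_mul_add_div_omega0 (α : Ordinal) {k : Ordinal} (hk : k < ω) :
    (ω * α + k) / ω = α := by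
  rw [mul_add_div _ omega0_ne_zero, div_eq_zero_of_lt hk, add_zero]

theorem omega0_mul_add_omega0_le {α β : Ordinal} (h : β < α) : ω * β + ω ≤ ω * α := by
  rw [← mul_succ]
  exact mul_le_mul_right (Order.succ_le_of_lt h) ω

theorem omega0_mul_add_lt_ord {c : Cardinal} (hc : ℵ₀ < c) {α k : Ordinal} (hα : α < c.ord)
    (hk : k < ω) : ω * α + k < c.ord :=
  have hω : ω < c.ord := Cardinal.omega0_lt_ord.mpr hc
  isPrincipal_add_ord hc.le (isPrincipal_mul_ord hc.le hω hα) (hk.trans hω)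

theorem exists_eq_omega0_mul_add_of_lt {α β : Ordinal} {k : ℕ} (hle : ω * α ≤ β)
    (hlt : β < ω * α + k) : ∃ m < k, β = ω * α + m := by
  rw [← Ordinal.add_sub_cancel_of_le hle, add_lt_add_iff_left] at hlt
  obtain ⟨m, hm⟩ := lt_omega0.mp (hlt.trans (natCast_lt_omega0 k))
  exact ⟨m, by exact_mod_cast hm ▸ hlt, by rw [← hm, Ordinal.add_sub_cancel_of_le hle]⟩

end Ordinal

open Ordinal in
theorem makerTurn_omega0_mul_add_two_mul (α : Ordinal) (n : ℕ) :
    makerTurn (ω * α + (2 * n : ℕ)) := by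
  have h2 : (2 : Ordinal) * ω = ω := mul_omega0 (by norm_num) (natCast_lt_omega0 2)
  rw [makerTurn, ← h2, mul_assoc]
  push_cast
  rw [← mul_add, mul_mod]

namespace CompleteBipartiteMaker

open Ordinal

variable {A B : Type} (eA : A ≃ ℕ)

def edge (a : ℕ) (b : B) : Sym2 (A ⊕ B) := s(.inl (eA.symm a), .inr b)

variable {eA}

theorem edge_inj {a a' : ℕ} {b b' : B} : edge eA a b = edge eA a' b' ↔ a = a' ∧ b = b' := by
  simp [edge]

theorem edge_mem_edgeSet (a : ℕ) (b : B) :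
    edge eA a b ∈ (completeBipartiteGraph A B).edgeSet := by
  simp [edge]

theorem exists_forall_edge_notMem {S : Set (Sym2 (A ⊕ B))} (hS : #S < #B) :
    ∃ b, ∀ a, edge eA a b ∉ S := by
  by_contra! h
  choose a ha using h
  exact hS.not_ge (mk_le_of_injective (f := fun b => (⟨_, ha b⟩ : S))
    fun b b' hbb => (edge_inj.mp (congrArg Subtype.val hbb)).2)

theorem finite_setOf_edge_mem_image {c : Ordinal.{0} → Sym2 (A ⊕ B)} {α : Ordinal.{0}} {b : B}
    (hb : ∀ a, edge eA a b ∉ c '' Iio (ω * α)) (k : ℕ) :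
    {a | edge eA a b ∈ c '' Iio (ω * α + k)}.Finite := by
  have hsub : {a | edge eA a b ∈ c '' Iio (ω * α + k)} ⊆
      ⋃ m ∈ Finset.range k, {a | c (ω * α + m) = edge eA a b} := by
    rintro a ⟨β, hβ, hcβ⟩
    have hle : ω * α ≤ β := not_lt.mp fun h => hb a ⟨β, h, hcβ⟩
    obtain ⟨m, hm, rfl⟩ := exists_eq_omega0_mul_add_of_lt hle hβ
    exact mem_biUnion (Finset.mem_coe.mpr (Finset.mem_range.mpr hm)) hcβ
  refine (Finite.biUnion (Finset.range k).finite_toSet fun m _ => ?_).subset hsub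
  exact Subsingleton.finite fun a ha a' ha' => (edge_inj.mp (ha.symm.trans ha')).1

variable (eA) [Inhabited B]

-- Round `α` consists of the turns `ω * α + n`; Maker's are those with `n` even.
def column (c : Ordinal.{0} → Sym2 (A ⊕ B)) (α : Ordinal.{0}) : B :=
  Classical.epsilon fun b => ∀ a, edge eA a b ∉ c '' Iio (ω * α)

def roundSet (c : Ordinal.{0} → Sym2 (A ⊕ B)) (α : Ordinal.{0}) : Set ℕ :=
  {a | ∃ n : ℕ, c (ω * α + (2 * n : ℕ)) = edge eA a (column eA c α)}

def reservoir (c : Ordinal.{0} → Sym2 (A ⊕ B)) (α : Ordinal.{0}) : Set ℕ :=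
  pseudoIntersection (roundSet eA c '' Iio α)

def makerRule (γ : Ordinal.{0}) (c : Ordinal.{0} → Sym2 (A ⊕ B)) : Sym2 (A ⊕ B) :=
  edge eA (Classical.epsilon fun a =>
      a ∈ reservoir eA c (γ / ω) ∧ edge eA a (column eA c (γ / ω)) ∉ c '' Iio γ)
    (column eA c (γ / ω))

def makerStrategy : MBStrategy (Sym2 (A ⊕ B)) :=
  .ofRule (completeBipartiteGraph A B).edgeSet (makerRule eA)

variable {eA} {c c' : Ordinal.{0} → Sym2 (A ⊕ B)}

theorem column_congr {α : Ordinal.{0}} (h : EqOn c c' (Iio (ω * α))) :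
    column eA c α = column eA c' α := by
  rw [column, column, h.image_eq]

theorem roundSet_congr {α : Ordinal.{0}} (h : EqOn c c' (Iio (ω * α + ω))) :
    roundSet eA c α = roundSet eA c' α := by
  have hn (n : ℕ) : c (ω * α + (2 * n : ℕ)) = c' (ω * α + (2 * n : ℕ)) :=
    h (add_lt_add_right (natCast_lt_omega0 _) _)
  simp only [roundSet, hn, column_congr (h.mono (Iio_subset_Iio le_self_add))]

theorem reservoir_congr {α : Ordinal.{0}} (h : EqOn c c' (Iio (ω * α))) :
    reservoir eA c α = reservoir eA c' α := by
  have hround : EqOn (roundSet eA c) (roundSet eA c') (Iio α) := fun β hβ =>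
    roundSet_congr (h.mono (Iio_subset_Iio (omega0_mul_add_omega0_le hβ)))
  rw [reservoir, reservoir, hround.image_eq]

theorem makerRule_congr {γ : Ordinal.{0}} (h : EqOn c c' (Iio γ)) :
    makerRule eA γ c = makerRule eA γ c' := by
  have hround : EqOn c c' (Iio (ω * (γ / ω))) := h.mono (Iio_subset_Iio (mul_div_le γ ω))
  rw [makerRule, makerRule, column_congr hround, reservoir_congr hround, h.image_eq]

theorem column_fresh (hB : ℵ₀ < #B) (c : Ordinal.{0} → Sym2 (A ⊕ B)) {α : Ordinal.{0}}
    (hα : α < (#B).ord) : ∀ a, edge eA a (column eA c α) ∉ c '' Iio (ω * α) := by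
  have hlt : ω * α < (#B).ord := isPrincipal_mul_ord hB.le (omega0_lt_ord.mpr hB) hα
  exact Classical.epsilon_spec (exists_forall_edge_notMem
    ((mk_image_Iio_le c _).trans_lt (lt_ord.mp hlt)))

theorem column_ne_of_nonempty (hB : ℵ₀ < #B) {α β : Ordinal.{0}} (hβα : β < α)
    (hα : α < (#B).ord) (hβ : (roundSet eA c β).Nonempty) :
    column eA c α ≠ column eA c β := by
  obtain ⟨a, n, hn⟩ := hβ
  intro h
  refine column_fresh hB c hα a ⟨_, ?_, h ▸ hn⟩
  exact (add_lt_add_right (natCast_lt_omega0 _) _).trans_le (omega0_mul_add_omega0_le hβα)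

theorem ord_mk_le_len (eA : A ≃ ℕ) (p : MBPlay (completeBipartiteGraph A B).edgeSet) :
    (#B).ord ≤ p.len := by
  refine ord_le.mpr ((mk_le_of_injective (f := fun b => ⟨edge eA 0 b, edge_mem_edgeSet 0 b⟩)
    fun b b' h => (edge_inj.mp (congrArg Subtype.val h)).2).trans p.mk_board_le)

variable {p : MBPlay (completeBipartiteGraph A B).edgeSet}

theorem edge_mem_claimed_of_mem_roundSet (eA : A ≃ ℕ) (hB : ℵ₀ < #B) {β : Ordinal.{0}}
    (hβ : β < (#B).ord) {a : ℕ} (ha : a ∈ roundSet eA p.moveFun β) :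
    edge eA a (column eA p.moveFun β) ∈ p.claimed makerTurn := by
  obtain ⟨n, hn⟩ := ha
  rw [← hn]
  exact p.moveFun_mem_claimed ((omega0_mul_add_lt_ord hB hβ (natCast_lt_omega0 _)).trans_le
    (ord_mk_le_len eA p)) (makerTurn_omega0_mul_add_two_mul β n)

variable (hf : p.Follows makerTurn (makerStrategy eA)) (hB : ℵ₀ < #B)
include hf hB

/-- Only finitely many edges at the column are claimed, all earlier in the same round, so the rule
always finds a free edge to the reservoir. -/
theorem exists_moveFun_eq_edge {α : Ordinal.{0}} (hα : α < (#B).ord)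
    (hR : (reservoir eA p.moveFun α).Infinite) (n : ℕ) :
    ∃ a ∈ reservoir eA p.moveFun α,
      p.moveFun (ω * α + (2 * n : ℕ)) = edge eA a (column eA p.moveFun α) := by
  set γ : Ordinal.{0} := ω * α + (2 * n : ℕ)
  have hdiv : γ / ω = α := omega0_mul_add_div_omega0 α (natCast_lt_omega0 _)
  have hγ : γ < p.len :=
    (omega0_mul_add_lt_ord hB hα (natCast_lt_omega0 _)).trans_le (ord_mk_le_len eA p)
  have hgood : ∃ a, a ∈ reservoir eA p.moveFun α ∧
      edge eA a (column eA p.moveFun α) ∉ p.moveFun '' Iio γ :=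
    (hR.sdiff (finite_setOf_edge_mem_image (column_fresh hB _ hα) (2 * n))).nonempty
  have hrule : makerRule eA γ p.moveFun = edge eA (Classical.epsilon fun a =>
      a ∈ reservoir eA p.moveFun α ∧
        edge eA a (column eA p.moveFun α) ∉ p.moveFun '' Iio γ) (column eA p.moveFun α) := by
    rw [makerRule, hdiv]
  obtain ⟨ha, hfresh⟩ := Classical.epsilon_spec hgood
  refine ⟨_, ha, ?_⟩
  rw [← hrule]
  exact hf.moveFun_eq_rule (fun _ h => makerRule_congr h) hγ
    (makerTurn_omega0_mul_add_two_mul α n) (hrule ▸ edge_mem_edgeSet _ _) (hrule ▸ hfresh)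

theorem roundSet_infinite_and_subset {α : Ordinal.{0}} (hα : α < (#B).ord)
    (hR : (reservoir eA p.moveFun α).Infinite) :
    (roundSet eA p.moveFun α).Infinite ∧
      roundSet eA p.moveFun α ⊆ reservoir eA p.moveFun α := by
  choose a ha hmove using exists_moveFun_eq_edge hf hB hα hR
  have hlt (n : ℕ) : ω * α + (2 * n : ℕ) < p.len :=
    (omega0_mul_add_lt_ord hB hα (natCast_lt_omega0 _)).trans_le (ord_mk_le_len eA p)
  refine ⟨infinite_of_injective_forall_mem (f := a) (fun m n hmn => ?_)
    fun n => ⟨n, hmove n⟩, ?_⟩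
  · have h := p.injOn_moveFun (hlt m) (hlt n) (by rw [hmove, hmove, hmn])
    simpa using h
  · rintro x ⟨n, hn⟩
    rw [(edge_inj.mp (hn.symm.trans (hmove n))).1]
    exact ha n

theorem hasSFIP_roundSet_image {o : Ordinal.{0}} (ho : o ≤ (#B).ord)
    (hR : ∀ β < o,
      IsPseudoIntersection (reservoir eA p.moveFun β) (roundSet eA p.moveFun '' Iio β)) :
    HasSFIP (roundSet eA p.moveFun '' Iio o) := by
  have hround β (hβ : β < o) :=
    roundSet_infinite_and_subset hf hB (hβ.trans_le ho) (hR β hβ).1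
  refine hasSFIP_image_of_diff_finite (fun β hβ => (hround β hβ).1) fun β _ γ hγ hβγ => ?_
  exact ((hR γ hγ).2 _ (mem_image_of_mem _ hβγ)).subset
    (sdiff_subset_sdiff_left (hround γ hγ).2)

variable (hp : ∀ F : Set (Set ℕ), (∀ X ∈ F, X.Infinite) → #F ≤ #B → HasSFIP F →
  ∃ P, IsPseudoIntersection P F)
include hp

theorem exists_isPseudoIntersection_roundSet_image {o : Ordinal.{0}} (ho : o ≤ (#B).ord)
    (hR : ∀ β < o,
      IsPseudoIntersection (reservoir eA p.moveFun β) (roundSet eA p.moveFun '' Iio β)) :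
    ∃ P, IsPseudoIntersection P (roundSet eA p.moveFun '' Iio o) := by
  refine hp _ ?_ ((mk_image_Iio_le _ o).trans (by simpa using card_le_card ho))
    (hasSFIP_roundSet_image hf hB ho hR)
  rintro _ ⟨β, hβ, rfl⟩
  exact (roundSet_infinite_and_subset hf hB (hβ.trans_le ho) (hR β hβ).1).1

theorem isPseudoIntersection_reservoir :
    ∀ α < (#B).ord,
      IsPseudoIntersection (reservoir eA p.moveFun α) (roundSet eA p.moveFun '' Iio α) := by
  intro α
  induction α using WellFoundedLT.induction with
  | _ α IH =>
    intro hα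
    exact isPseudoIntersection_pseudoIntersection <|
      exists_isPseudoIntersection_roundSet_image hf hB hp hα.le
        fun β hβ => IH β hβ (hβ.trans hα)

theorem injOn_column : InjOn (column eA p.moveFun) (Iio (#B).ord) := by
  have hne β (hβ : β < (#B).ord) : (roundSet eA p.moveFun β).Nonempty :=
    (roundSet_infinite_and_subset hf hB hβ
      (isPseudoIntersection_reservoir hf hB hp β hβ).1).1.nonempty
  intro β hβ α hα h
  by_contra hne'
  rcases lt_or_gt_of_ne hne' with hlt | hlt
  · exact column_ne_of_nonempty hB hlt hα (hne β hβ) h.symm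
  · exact column_ne_of_nonempty hB hlt hβ (hne α hα) h

theorem exists_infinite_subset_roundSet (hcf : ℵ₀ < (#B).ord.cof) :
    ∃ Q : Set ℕ, Q.Infinite ∧ ∃ g : B → Ordinal.{0}, Function.Injective g ∧
      ∀ b, g b < (#B).ord ∧ Q ⊆ roundSet eA p.moveFun (g b) := by
  obtain ⟨P, hP⟩ := exists_isPseudoIntersection_roundSet_image hf hB hp le_rfl
    (isPseudoIntersection_reservoir hf hB hp)
  let e : (#B).ord.ToType ≃o Iio (#B).ord := (ToType.mk (o := (#B).ord)).symm
  have hPe : IsPseudoIntersection P (range fun i => roundSet eA p.moveFun (e i)) := by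
    refine ⟨hP.1, ?_⟩
    rintro _ ⟨i, rfl⟩
    exact hP.2 _ (mem_image_of_mem _ (e i).2)
  have hmk : #(#B).ord.ToType = #B := by rw [mk_toType, card_ord]
  obtain ⟨Q, hQ, hcard⟩ := hPe.exists_infinite_subset (by rwa [hmk])
  obtain ⟨g⟩ := le_def _ _ |>.mp (hmk ▸ hcard)
  exact ⟨Q, hQ, fun b => e (g b), Subtype.val_injective.comp (e.injective.comp
    (Subtype.val_injective.comp g.injective)), fun b => ⟨(e (g b)).2, (g b).2⟩⟩

theorem makerStrategy_wins (hcf : ℵ₀ < (#B).ord.cof) :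
    ContainsCopy (SimpleGraph.fromEdgeSet (p.claimed makerTurn)) (completeBipartiteGraph A B) := by
  obtain ⟨Q, hQ, g, hg, hgQ⟩ := exists_infinite_subset_roundSet hf hB hp hcf
  let n := hQ.natEmbedding
  refine containsCopy_completeBipartiteGraph
    ⟨fun x => .inl (eA.symm (n (eA x))), fun x y h => eA.injective
      (n.injective (Subtype.val_injective (eA.symm.injective (Sum.inl_injective h))))⟩
    ⟨fun b => .inr (column eA p.moveFun (g b)), fun b b' h => hg (injOn_column hf hB hp
      (hgQ b).1 (hgQ b').1 (Sum.inr_injective h))⟩ fun x b => ?_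
  rw [SimpleGraph.fromEdgeSet_adj]
  exact ⟨edge_mem_claimed_of_mem_roundSet eA hB (hgQ b).1 ((hgQ b).2 (n (eA x)).2), by simp⟩

end CompleteBipartiteMaker

end

/-- Let `κ` be a cardinal of uncountable cofinality and assume
every family of at most `κ` infinite subsets of `ℕ` with the strong finite
intersection property has an infinite pseudo-intersection (i.e. `κ < 𝔭`).
Then Maker has a winning strategy in the Maker–Breaker game
`MB(K_{ω,κ}, K_{ω,κ})`. -/
theorem makerWins_completeBipartite_omega_kappa
    (κ : Cardinal.{0}) (hcf : ℵ₀ < κ.ord.cof)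
    (hp : ∀ F : Set (Set ℕ), (∀ A ∈ F, A.Infinite) → #F ≤ κ → HasSFIP F →
      ∃ P : Set ℕ, P.Infinite ∧ ∀ A ∈ F, (P \ A).Finite)
    (A B : Type) (hA : #A = ℵ₀) (hB : #B = κ) :
    MakerWins (completeBipartiteGraph A B) (completeBipartiteGraph A B) := by
  subst hB
  have hκ : ℵ₀ < #B := hcf.trans_le (Ordinal.cof_ord_le _)
  have : Inhabited B :=
    Classical.inhabited_of_nonempty (mk_ne_zero_iff.mp (aleph0_pos.trans hκ).ne')
  obtain ⟨eA⟩ : Nonempty (A ≃ ℕ) := Cardinal.eq.mp (hA.trans mk_nat.symm)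
  exact ⟨CompleteBipartiteMaker.makerStrategy eA, MBStrategy.isLegal_ofRule _ _,
    fun _ hf => CompleteBipartiteMaker.makerStrategy_wins hf hκ hp hcf⟩
end
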